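/- If for each k = 1,…,r the real numbers σ^k_1 ≥ … ≥ σ^k_{n'} ≥ 0 are the singular values of a matrix Â_k ∈ ℂ^{m×n} and τ^k_1 ≥ … ≥ τ^k_{p'} ≥ 0 are the singular values of a submatrix B̂_k ∈ ℂ^{p×q} of Â_k (obtained by deleting m−p rows and n−q columns), then the averages α_j = (1/r)∑_{k=1}^r σ^k_j and β_j = (1/r)∑_{k=1}^r τ^k_j satisfy α_j ≥ β_j for all j = 1,…,p'. -/

import Mathlib

/-!
Write `λⱼ(H)` for the `j`-th largest eigenvalue of a Hermitian matrix `H`. By Courant–Fischer,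
`K` has a `(j+1)`-dimensional subspace on which `re ⟪x, K x⟫ ≥ λⱼ(K) ‖x‖²`, while every
`(j+1)`-dimensional subspace contains some `x ≠ 0` with `re ⟪x, H x⟫ ≤ λⱼ(H) ‖x‖²`; both come
from a span of eigenvectors of the right dimension. Hence `λⱼ(K) ≤ λⱼ(H)` whenever `K ≤ Eᴴ H E`
for an isometry `E`. For `B = A.submatrix f g` take for `E` the zero padding along `g`:
`B y` keeps only some of the coordinates of `A (E y)`, so `BᴴB ≤ Eᴴ (AᴴA) E` and every singular
value of `B` is at most the corresponding one of `A`. Averaging over `k` keeps the inequality.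
-/

open scoped BigOperators

/-- The `j`-th largest singular value (0-indexed) of a matrix, defined as the square
root of the `j`-th largest eigenvalue of `Aᴴ * A`. -/
noncomputable def sval {𝕜 : Type} [RCLike 𝕜] {m n : ℕ} (A : Matrix (Fin m) (Fin n) 𝕜)
    (j : Fin n) : ℝ :=
  Real.sqrt ((Matrix.isHermitian_conjTranspose_mul_self A).eigenvalues
    (Tuple.sort (Matrix.isHermitian_conjTranspose_mul_self A).eigenvalues j.rev))

open Matrix

lemma Submodule.finrank_map_of_injective {R M N : Type*} [Ring R] [AddCommGroup M]
    [AddCommGroup N] [Module R M] [Module R N] {f : M →ₗ[R] N} (hf : Function.Injective f)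
    (p : Submodule R M) : Module.finrank R (p.map f) = Module.finrank R p :=
  (Submodule.equivMapOfInjective f hf p).finrank_eq.symm

lemma LinearMap.finrank_iInf_ker_proj_compl {K ι : Type*} [DivisionRing K] [DecidableEq ι]
    (s : Finset ι) :
    Module.finrank K (⨅ i ∈ (↑s : Set ι)ᶜ, LinearMap.ker (LinearMap.proj i : (ι → K) →ₗ[K] K) :
      Submodule K (ι → K)) = s.card := by
  rw [(LinearMap.iInfKerProjEquiv K (fun _ : ι => K) disjoint_compl_right
    (Set.union_compl_self _).ge).finrank_eq]
  simp

namespace Matrix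

variable {𝕜 : Type*} [RCLike 𝕜] {n k : Type*} [Fintype n] [Fintype k]

lemma re_star_dotProduct_self (v : n → 𝕜) : RCLike.re (star v ⬝ᵥ v) = ∑ i, ‖v i‖ ^ 2 := by
  simp only [dotProduct, Pi.star_apply, RCLike.star_def, RCLike.conj_mul, map_sum,
    ← RCLike.ofReal_pow, RCLike.ofReal_re]

lemma re_star_dotProduct_self_pos {v : n → 𝕜} (hv : v ≠ 0) : 0 < RCLike.re (star v ⬝ᵥ v) := by
  obtain ⟨i, hi⟩ := Function.ne_iff.1 hv
  rw [re_star_dotProduct_self]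
  exact Finset.sum_pos' (fun _ _ => by positivity)
    ⟨i, Finset.mem_univ _, pow_pos (norm_pos_iff.2 hi) 2⟩

lemma re_star_dotProduct_diagonal_mulVec [DecidableEq n] (d : n → ℝ) (v : n → 𝕜) :
    RCLike.re (star v ⬝ᵥ diagonal (RCLike.ofReal ∘ d) *ᵥ v) = ∑ i, d i * ‖v i‖ ^ 2 := by
  simp only [dotProduct, mulVec_diagonal, Pi.star_apply, RCLike.star_def, Function.comp_apply,
    mul_left_comm _ (RCLike.ofReal _), RCLike.conj_mul, map_sum, ← RCLike.ofReal_pow,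
    ← RCLike.ofReal_mul, RCLike.ofReal_re]

lemma star_dotProduct_conjTranspose_mul_self_mulVec {m : Type*} [Fintype m]
    (A : Matrix m n 𝕜) (x : n → 𝕜) :
    star x ⬝ᵥ (Aᴴ * A) *ᵥ x = star (A *ᵥ x) ⬝ᵥ A *ᵥ x := by
  rw [← mulVec_mulVec, dotProduct_mulVec, star_mulVec]

lemma star_mulVec_dotProduct_mulVec (E : Matrix n k 𝕜) (H : Matrix n n 𝕜) (y : k → 𝕜) :
    star (E *ᵥ y) ⬝ᵥ H *ᵥ (E *ᵥ y) = star y ⬝ᵥ (Eᴴ * H * E) *ᵥ y := by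
  rw [star_mulVec, ← dotProduct_mulVec, mulVec_mulVec, mulVec_mulVec]

lemma mulVec_injective_of_conjTranspose_mul_self_eq_one [DecidableEq k]
    {E : Matrix n k 𝕜} (hE : Eᴴ * E = 1) : Function.Injective E.mulVec := by
  intro x y h
  simpa [mulVec_mulVec, hE] using congrArg (Eᴴ *ᵥ ·) h

lemma star_mulVec_dotProduct_self_of_conjTranspose_mul_self_eq_one [DecidableEq k]
    {E : Matrix n k 𝕜} (hE : Eᴴ * E = 1) (y : k → 𝕜) :
    star (E *ᵥ y) ⬝ᵥ E *ᵥ y = star y ⬝ᵥ y := by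
  rw [star_mulVec, ← dotProduct_mulVec, mulVec_mulVec, hE, one_mulVec]

variable [DecidableEq n] {H : Matrix n n 𝕜}

lemma IsHermitian.re_star_dotProduct_mulVec_eigenvectorUnitary (hH : H.IsHermitian)
    (w : n → 𝕜) :
    RCLike.re (star ((hH.eigenvectorUnitary : Matrix n n 𝕜) *ᵥ w) ⬝ᵥ
        H *ᵥ ((hH.eigenvectorUnitary : Matrix n n 𝕜) *ᵥ w)) =
      ∑ l, hH.eigenvalues l * ‖w l‖ ^ 2 := by
  have hdiag := hH.conjStarAlgAut_star_eigenvectorUnitary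
  rw [Unitary.conjStarAlgAut_star_apply] at hdiag
  rw [star_mulVec_dotProduct_mulVec, ← star_eq_conjTranspose, hdiag,
    re_star_dotProduct_diagonal_mulVec]

/-- The columns of `eigenvectorUnitary` are eigenvectors, so this is the span of those indexed
by `s`. -/
noncomputable def IsHermitian.eigenvectorSpan (hH : H.IsHermitian) (s : Finset n) :
    Submodule 𝕜 (n → 𝕜) :=
  (⨅ i ∈ (↑s : Set n)ᶜ, LinearMap.ker (LinearMap.proj i : (n → 𝕜) →ₗ[𝕜] 𝕜)).map
    (hH.eigenvectorUnitary : Matrix n n 𝕜).mulVecLin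

lemma IsHermitian.finrank_eigenvectorSpan (hH : H.IsHermitian) (s : Finset n) :
    Module.finrank 𝕜 (hH.eigenvectorSpan s) = s.card := by
  rw [eigenvectorSpan, Submodule.finrank_map_of_injective,
    LinearMap.finrank_iInf_ker_proj_compl]
  exact mulVec_injective_of_conjTranspose_mul_self_eq_one (Unitary.coe_star_mul_self _)

lemma IsHermitian.mem_eigenvectorSpan (hH : H.IsHermitian) {s : Finset n} {x : n → 𝕜} :
    x ∈ hH.eigenvectorSpan s ↔
      ∃ w : n → 𝕜, (∀ l ∉ s, w l = 0) ∧ (hH.eigenvectorUnitary : Matrix n n 𝕜) *ᵥ w = x := by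
  simp [eigenvectorSpan]

lemma IsHermitian.re_star_dotProduct_mulVec_le_of_mem_eigenvectorSpan (hH : H.IsHermitian)
    {s : Finset n} {c : ℝ} (hc : ∀ l ∈ s, hH.eigenvalues l ≤ c) {x : n → 𝕜}
    (hx : x ∈ hH.eigenvectorSpan s) :
    RCLike.re (star x ⬝ᵥ H *ᵥ x) ≤ c * RCLike.re (star x ⬝ᵥ x) := by
  obtain ⟨w, hw, rfl⟩ := hH.mem_eigenvectorSpan.1 hx
  rw [hH.re_star_dotProduct_mulVec_eigenvectorUnitary,
    star_mulVec_dotProduct_self_of_conjTranspose_mul_self_eq_one (Unitary.coe_star_mul_self _),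
    re_star_dotProduct_self, Finset.mul_sum]
  refine Finset.sum_le_sum fun l _ => ?_
  by_cases hl : l ∈ s
  · exact mul_le_mul_of_nonneg_right (hc l hl) (by positivity)
  · simp [hw l hl]

lemma IsHermitian.le_re_star_dotProduct_mulVec_of_mem_eigenvectorSpan (hH : H.IsHermitian)
    {s : Finset n} {c : ℝ} (hc : ∀ l ∈ s, c ≤ hH.eigenvalues l) {x : n → 𝕜}
    (hx : x ∈ hH.eigenvectorSpan s) :
    c * RCLike.re (star x ⬝ᵥ x) ≤ RCLike.re (star x ⬝ᵥ H *ᵥ x) := by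
  obtain ⟨w, hw, rfl⟩ := hH.mem_eigenvectorSpan.1 hx
  rw [hH.re_star_dotProduct_mulVec_eigenvectorUnitary,
    star_mulVec_dotProduct_self_of_conjTranspose_mul_self_eq_one (Unitary.coe_star_mul_self _),
    re_star_dotProduct_self, Finset.mul_sum]
  refine Finset.sum_le_sum fun l _ => ?_
  by_cases hl : l ∈ s
  · exact mul_le_mul_of_nonneg_right (hc l hl) (by positivity)
  · simp [hw l hl]

end Matrix

lemma Submodule.exists_mem_ne_zero_of_finrank_add_gt {K V : Type*} [DivisionRing K]
    [AddCommGroup V] [Module K V] [FiniteDimensional K V] {W T : Submodule K V}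
    (h : Module.finrank K V < Module.finrank K W + Module.finrank K T) :
    ∃ x ∈ W, x ∈ T ∧ x ≠ 0 := by
  have hsup := Submodule.finrank_sup_add_finrank_inf_eq W T
  have hle := (W ⊔ T).finrank_le
  obtain ⟨x, hx, hx0⟩ := Submodule.exists_mem_ne_zero_of_ne_bot
    (Submodule.one_le_finrank_iff.1 (by omega) : W ⊓ T ≠ ⊥)
  exact ⟨x, hx.1, hx.2, hx0⟩

namespace Matrix

variable {𝕜 : Type*} [RCLike 𝕜] {b : ℕ} {H : Matrix (Fin b) (Fin b) 𝕜}

/-- The `j`-th largest eigenvalue, counting from `j = 0`. -/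
noncomputable def IsHermitian.eigenvaluesDesc (hH : H.IsHermitian) (j : Fin b) : ℝ :=
  hH.eigenvalues (Tuple.sort hH.eigenvalues j.rev)

theorem IsHermitian.exists_mem_ne_zero_re_le_eigenvaluesDesc (hH : H.IsHermitian) (j : Fin b)
    {W : Submodule 𝕜 (Fin b → 𝕜)} (hW : j + 1 ≤ Module.finrank 𝕜 W) :
    ∃ x ∈ W, x ≠ 0 ∧
      RCLike.re (star x ⬝ᵥ H *ᵥ x) ≤ hH.eigenvaluesDesc j * RCLike.re (star x ⬝ᵥ x) := by
  set σ := Tuple.sort hH.eigenvalues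
  set T := hH.eigenvectorSpan ((Finset.Iic j.rev).map σ.toEmbedding)
  have hT : Module.finrank 𝕜 T = b - j := by
    rw [finrank_eigenvectorSpan, Finset.card_map, Fin.card_Iic, Fin.val_rev]
    omega
  obtain ⟨x, hxW, hxT, hx0⟩ :=
    Submodule.exists_mem_ne_zero_of_finrank_add_gt (W := W) (T := T)
      (by rw [hT, Module.finrank_fin_fun]; omega)
  refine ⟨x, hxW, hx0,
    hH.re_star_dotProduct_mulVec_le_of_mem_eigenvectorSpan (fun l hl => ?_) hxT⟩
  rw [Finset.mem_map_equiv, Finset.mem_Iic] at hl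
  simpa [σ, eigenvaluesDesc] using Tuple.monotone_sort hH.eigenvalues hl

theorem IsHermitian.exists_finrank_eq_eigenvaluesDesc_le_re (hH : H.IsHermitian) (j : Fin b) :
    ∃ W : Submodule 𝕜 (Fin b → 𝕜), Module.finrank 𝕜 W = j + 1 ∧ ∀ x ∈ W,
      hH.eigenvaluesDesc j * RCLike.re (star x ⬝ᵥ x) ≤ RCLike.re (star x ⬝ᵥ H *ᵥ x) := by
  set σ := Tuple.sort hH.eigenvalues
  refine ⟨hH.eigenvectorSpan ((Finset.Ici j.rev).map σ.toEmbedding), ?_, fun x hx =>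
    hH.le_re_star_dotProduct_mulVec_of_mem_eigenvectorSpan (fun l hl => ?_) hx⟩
  · rw [finrank_eigenvectorSpan, Finset.card_map, Fin.card_Ici, Fin.val_rev]
    omega
  · rw [Finset.mem_map_equiv, Finset.mem_Ici] at hl
    simpa [σ, eigenvaluesDesc] using Tuple.monotone_sort hH.eigenvalues hl

theorem IsHermitian.eigenvaluesDesc_le_of_re_le_compression {q n : ℕ}
    {K : Matrix (Fin q) (Fin q) 𝕜} {H : Matrix (Fin n) (Fin n) 𝕜} (hK : K.IsHermitian)
    (hH : H.IsHermitian) {E : Matrix (Fin n) (Fin q) 𝕜} (hE : Eᴴ * E = 1)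
    (hKH : ∀ y, RCLike.re (star y ⬝ᵥ K *ᵥ y) ≤ RCLike.re (star (E *ᵥ y) ⬝ᵥ H *ᵥ (E *ᵥ y)))
    (j : ℕ) (hjq : j < q) (hjn : j < n) :
    hK.eigenvaluesDesc ⟨j, hjq⟩ ≤ hH.eigenvaluesDesc ⟨j, hjn⟩ := by
  obtain ⟨W, hWrank, hW⟩ := hK.exists_finrank_eq_eigenvaluesDesc_le_re ⟨j, hjq⟩
  have hEinj := mulVec_injective_of_conjTranspose_mul_self_eq_one hE
  obtain ⟨_, ⟨y, hyW, rfl⟩, hy0, hHy⟩ :=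
    hH.exists_mem_ne_zero_re_le_eigenvaluesDesc ⟨j, hjn⟩ (W := W.map E.mulVecLin)
      (by rw [Submodule.finrank_map_of_injective hEinj, hWrank])
  have hy : y ≠ 0 := by
    rintro rfl
    exact hy0 (map_zero _)
  refine le_of_mul_le_mul_right ?_ (re_star_dotProduct_self_pos hy)
  calc hK.eigenvaluesDesc ⟨j, hjq⟩ * RCLike.re (star y ⬝ᵥ y)
      ≤ RCLike.re (star y ⬝ᵥ K *ᵥ y) := hW y hyW
    _ ≤ RCLike.re (star (E *ᵥ y) ⬝ᵥ H *ᵥ (E *ᵥ y)) := hKH y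
    _ ≤ hH.eigenvaluesDesc ⟨j, hjn⟩ * RCLike.re (star (E *ᵥ y) ⬝ᵥ E *ᵥ y) := hHy
    _ = hH.eigenvaluesDesc ⟨j, hjn⟩ * RCLike.re (star y ⬝ᵥ y) := by
      rw [star_mulVec_dotProduct_self_of_conjTranspose_mul_self_eq_one hE]

end Matrix

lemma Fintype.sum_comp_le_sum_of_injective {ι κ M : Type*} [Fintype ι] [Fintype κ]
    [AddCommMonoid M] [PartialOrder M] [IsOrderedAddMonoid M] {f : ι → κ}
    (hf : Function.Injective f) {h : κ → M} (hh : ∀ i, 0 ≤ h i) : ∑ i, h (f i) ≤ ∑ i, h i :=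
  (Finset.sum_map Finset.univ ⟨f, hf⟩ h).symm.trans_le (Finset.sum_le_univ_sum_of_nonneg hh)

lemma sval_eq_sqrt_eigenvaluesDesc {𝕜 : Type} [RCLike 𝕜] {m n : ℕ}
    (A : Matrix (Fin m) (Fin n) 𝕜) (j : Fin n) :
    sval A j = √((isHermitian_conjTranspose_mul_self A).eigenvaluesDesc j) :=
  rfl

theorem sval_submatrix_le {𝕜 : Type} [RCLike 𝕜] {m n p q : ℕ} (A : Matrix (Fin m) (Fin n) 𝕜)
    {f : Fin p → Fin m} {g : Fin q → Fin n} (hf : Function.Injective f)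
    (hg : Function.Injective g) (j : ℕ) (hjq : j < q) (hjn : j < n) :
    sval (A.submatrix f g) ⟨j, hjq⟩ ≤ sval A ⟨j, hjn⟩ := by
  set E : Matrix (Fin n) (Fin q) 𝕜 := (1 : Matrix (Fin n) (Fin n) 𝕜).submatrix id g
  have hE : Eᴴ * E = 1 := by
    rw [conjTranspose_submatrix, conjTranspose_one,
      ← submatrix_mul _ _ _ _ _ Function.bijective_id, mul_one, submatrix_one _ hg]
  have hAE : A * E = A.submatrix id g := by
    conv_lhs => rw [← submatrix_id_id A]
    rw [← submatrix_mul _ _ _ _ _ Function.bijective_id, Matrix.mul_one]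
  rw [sval_eq_sqrt_eigenvaluesDesc, sval_eq_sqrt_eigenvaluesDesc]
  refine Real.sqrt_le_sqrt (IsHermitian.eigenvaluesDesc_le_of_re_le_compression _ _ hE
    (fun y => ?_) j hjq hjn)
  rw [star_dotProduct_conjTranspose_mul_self_mulVec,
    star_dotProduct_conjTranspose_mul_self_mulVec, mulVec_mulVec, hAE, re_star_dotProduct_self,
    re_star_dotProduct_self]
  exact Fintype.sum_comp_le_sum_of_injective hf
    (h := fun i => ‖(A.submatrix id g *ᵥ y) i‖ ^ 2) fun _ => by positivity

/-- interlacing, first half: the averaged singular values of submatrices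
are dominated by those of the original matrices. -/
theorem stmt_0 (m n p q r : ℕ) (hq : q ≤ n)
    (A : Fin r → Matrix (Fin m) (Fin n) ℂ)
    (f : Fin p → Fin m) (g : Fin q → Fin n) (hf : StrictMono f) (hg : StrictMono g)
    (B : Fin r → Matrix (Fin p) (Fin q) ℂ)
    (hB : ∀ k, B k = (A k).submatrix f g)
    (j : ℕ) (hj : j < min p q) :
    (1 / (r : ℝ)) * ∑ k, sval (B k) ⟨j, by omega⟩ ≤
      (1 / (r : ℝ)) * ∑ k, sval (A k) ⟨j, by omega⟩ := by
  gcongr with k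
  rw [hB k]
  exact sval_submatrix_le (A k) hf.injective hg.injective j _ _
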